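/- arXiv:2404.05863 — 4 statements merged into one kernel-verified Lean document; each statement's English description precedes it below -/
import Mathlib

section
/- Let γ, Δ > 0 and let (y_{s,k})_{k≥k₀} be a real sequence. Define the sequence (y_k) by y_{k₀} = y_{s,k₀} and, for k > k₀, y_k = y_{k−1} + sat_{γΔ}(y_{s,k} − y_{k−1}), where sat_M(x) = x if |x| ≤ M and sat_M(x) = M·sign(x) otherwise. Then for each k > k₀, y_k is the unique real number satisfying the implicit relation y_k = y_{k−1} − γΔ·sign(y_k − y_{s,k}), where sign is interpreted set-valued at 0 (sign(0) ∈ [−1,1]). -/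
/-- Saturation function with threshold `M`. -/
noncomputable def sat (M x : ℝ) : ℝ := if |x| ≤ M then x else M * Real.sign x

/-- Set-valued sign function: `{1}` for positive, `{-1}` for negative, `[-1,1]` at `0`. -/
noncomputable def SignSet (x : ℝ) : Set ℝ :=
  if 0 < x then {1} else if x < 0 then {-1} else Set.Icc (-1) 1

/-!
`SignSet` is the subdifferential of `|·|`, hence a monotone set-valued map: this is what makes
the implicit relation `z ∈ a - M • SignSet (z - b)` have at most one solution for `M ≥ 0`.
Solving it by cases on `z - b` (positive, negative, zero) gives `z = a - M`, `z = a + M`, or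
`z = b` with `|b - a| ≤ M`, which is exactly the saturated update `a + sat M (b - a)`.
-/

theorem mem_signSet_iff {s x : ℝ} : s ∈ SignSet x ↔ s ∈ Set.Icc (-1) 1 ∧ x * s = |x| := by
  rcases lt_trichotomy x 0 with hx | rfl | hx
  · simp only [SignSet, if_neg hx.not_gt, if_pos hx, Set.mem_singleton_iff, Set.mem_Icc,
      abs_of_neg hx]
    constructor
    · rintro rfl; norm_num
    · rintro ⟨-, h⟩; exact mul_left_cancel₀ hx.ne (by linarith)
  · simp [SignSet]
  · simp only [SignSet, if_pos hx, Set.mem_singleton_iff, Set.mem_Icc, abs_of_pos hx]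
    constructor
    · rintro rfl; norm_num
    · rintro ⟨-, h⟩; exact mul_left_cancel₀ hx.ne' (by linarith)

theorem mul_le_abs_of_mem_signSet {s x : ℝ} (hs : s ∈ SignSet x) (y : ℝ) : y * s ≤ |y| :=
  calc y * s ≤ |y| * |s| := (le_abs_self _).trans (abs_mul _ _).le
    _ ≤ |y| := mul_le_of_le_one_right (abs_nonneg _) (abs_le.mpr (mem_signSet_iff.mp hs).1)

theorem signSet_monotone {x x' s s' : ℝ} (hs : s ∈ SignSet x) (hs' : s' ∈ SignSet x') :
    0 ≤ (x - x') * (s - s') := by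
  have hxs := (mem_signSet_iff.mp hs).2
  have hx's' := (mem_signSet_iff.mp hs').2
  have hx's := mul_le_abs_of_mem_signSet hs x'
  have hxs' := mul_le_abs_of_mem_signSet hs' x
  linear_combination hx's + hxs' - hxs - hx's'

theorem eq_of_mem_sub_mul_signSet {M a b z z' : ℝ} (hM : 0 ≤ M)
    (hz : ∃ s ∈ SignSet (z - b), z = a - M * s) (hz' : ∃ s ∈ SignSet (z' - b), z' = a - M * s) :
    z = z' := by
  obtain ⟨s, hs, rfl⟩ := hz
  obtain ⟨s', hs', rfl⟩ := hz'
  have hsq : (M * s' - M * s) ^ 2 = -(M * ((a - M * s - b - (a - M * s' - b)) * (s - s'))) := by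
    ring
  have hsq_nonpos : (M * s' - M * s) ^ 2 ≤ 0 :=
    hsq ▸ neg_nonpos.mpr (mul_nonneg hM (signSet_monotone hs hs'))
  linarith [pow_eq_zero_iff two_ne_zero |>.mp (le_antisymm hsq_nonpos (sq_nonneg _))]

theorem exists_mem_signSet_sat_sub_self {M : ℝ} (hM : 0 ≤ M) (d : ℝ) :
    ∃ s ∈ SignSet (sat M d - d), sat M d = -(M * s) := by
  by_cases hd : |d| ≤ M
  · refine ⟨-d / M, ?_, ?_⟩
    · rw [sat, if_pos hd, sub_self, SignSet, if_neg (lt_irrefl 0), if_neg (lt_irrefl 0),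
        Set.mem_Icc, ← abs_le, abs_div, abs_neg, abs_of_nonneg hM]
      exact div_le_one_of_le₀ hd hM
    · rcases hM.eq_or_lt with rfl | hM
      · simp [sat, abs_nonpos_iff.mp hd]
      · rw [sat, if_pos hd]; field_simp
  · push Not at hd
    have hd₀ : d ≠ 0 := by rintro rfl; simp only [abs_zero] at hd; linarith
    rcases hd₀.lt_or_gt with hneg | hpos
    · rw [abs_of_neg hneg] at hd
      refine ⟨1, ?_, ?_⟩ <;> rw [sat, if_neg (by rw [abs_of_neg hneg]; linarith),
        Real.sign_of_neg hneg]
      · rw [SignSet, if_pos (by linarith)]; rfl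
      · ring
    · rw [abs_of_pos hpos] at hd
      refine ⟨-1, ?_, ?_⟩ <;> rw [sat, if_neg (by rw [abs_of_pos hpos]; linarith),
        Real.sign_of_pos hpos]
      · rw [SignSet, if_neg (by linarith), if_pos (by linarith)]; rfl
      · ring

theorem explicit_eq_implicit_discretization_general
    (γ Δ : ℝ) (hγ : 0 < γ) (hΔ : 0 < Δ) (k₀ : ℕ)
    (ys y : ℕ → ℝ)
    (hrec : ∀ k, k₀ < k → y k = y (k - 1) + sat (γ * Δ) (ys k - y (k - 1))) :
    ∀ k, k₀ < k →
      (∃ s ∈ SignSet (y k - ys k), y k = y (k - 1) - γ * Δ * s) ∧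
      (∀ z : ℝ, (∃ s ∈ SignSet (z - ys k), z = y (k - 1) - γ * Δ * s) → z = y k) := by
  intro k hk
  have hM : 0 ≤ γ * Δ := by positivity
  have hsolves : ∃ s ∈ SignSet (y k - ys k), y k = y (k - 1) - γ * Δ * s := by
    obtain ⟨s, hs, hsat⟩ := exists_mem_signSet_sat_sub_self hM (ys k - y (k - 1))
    refine ⟨s, ?_, ?_⟩
    · convert hs using 2; rw [hrec k hk]; ring
    · rw [hrec k hk, hsat]; ring
  exact ⟨hsolves, fun z hz => eq_of_mem_sub_mul_signSet hM hz hsolves⟩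

/-- The explicit saturated update `y_k = y_{k−1} + sat_{γΔ}(y_{s,k} − y_{k−1})` is,
for each `k > k₀`, the unique solution of the implicit relation
`y_k = y_{k−1} − γΔ·sign(y_k − y_{s,k})` with set-valued sign at `0`. -/
theorem explicit_eq_implicit_discretization
    (γ Δ : ℝ) (hγ : 0 < γ) (hΔ : 0 < Δ) (k₀ : ℕ)
    (ys y : ℕ → ℝ)
    (h0 : y k₀ = ys k₀)
    (hrec : ∀ k, k₀ < k → y k = y (k - 1) + sat (γ * Δ) (ys k - y (k - 1))) :
    ∀ k, k₀ < k →
      (∃ s ∈ SignSet (y k - ys k), y k = y (k - 1) - γ * Δ * s) ∧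
      (∀ z : ℝ, (∃ s ∈ SignSet (z - ys k), z = y (k - 1) - γ * Δ * s) → z = y k) :=
  explicit_eq_implicit_discretization_general γ Δ hγ hΔ k₀ ys y hrec
end

section
/- Let γ > L ≥ 0 and Δ > 0. Suppose sequences (e_k), (η_k), (g_k) satisfy e_k = e_{k−1} − γΔ·sign(e_k − η_k) + g_k with |g_k| ≤ LΔ for all k, and suppose |η_k| ≤ B for all k ≥ k₁. If for some k ≥ k₁ one has |e_k| > B, then |e_k| − |e_{k−1}| ≤ −Δ(γ − L). -/
/-- Discrete Lyapunov decrease: for the implicitly discretized perturbed error dynamics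
`e_k = e_{k−1} − γΔ·sign(e_k − η_k) + g_k` with `|g_k| ≤ LΔ` and `|η_k| ≤ B` for
`k ≥ k₁`, whenever `|e_k| > B` one has `|e_k| − |e_{k−1}| ≤ −Δ(γ − L)`. -/
theorem discrete_lyapunov_decrease
    (γ L Δ B : ℝ) (hL : 0 ≤ L) (hγ : L < γ) (hΔ : 0 < Δ) (hB : 0 ≤ B)
    (k₁ : ℕ) (e η g s : ℕ → ℝ)
    (hs : ∀ k, s k ∈ SignSet (e k - η k))
    (hrec : ∀ k, e (k + 1) = e k - γ * Δ * s (k + 1) + g (k + 1))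
    (hg : ∀ k, |g k| ≤ L * Δ)
    (hη : ∀ k, k₁ ≤ k → |η k| ≤ B) :
    ∀ k, k₁ ≤ k + 1 → B < |e (k + 1)| →
      |e (k + 1)| - |e k| ≤ -(Δ * (γ - L)) := by
  intro k hk hBe
  obtain ⟨hη1, hη2⟩ := abs_le.mp (hη (k + 1) hk)
  obtain ⟨hg1, hg2⟩ := abs_le.mp (hg (k + 1))
  have hrk := hrec k
  have hsmem := hs (k + 1)
  have he1 := le_abs_self (e k)
  have he2 := neg_abs_le (e k)
  rcases lt_abs.mp hBe with h | h
  · -- e(k+1) > B ≥ η(k+1): s = 1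
    have hpos : 0 < e (k + 1) - η (k + 1) := by linarith
    rw [SignSet, if_pos hpos] at hsmem
    have hs1 : s (k + 1) = 1 := hsmem
    have habs : |e (k + 1)| = e (k + 1) := abs_of_pos (by linarith)
    rw [habs, hrk, hs1]
    nlinarith
  · -- e(k+1) < -B ≤ η(k+1): s = -1
    have hneg : e (k + 1) - η (k + 1) < 0 := by linarith
    rw [SignSet, if_neg (by linarith), if_pos hneg] at hsmem
    have hs1 : s (k + 1) = -1 := hsmem
    have habs : |e (k + 1)| = -e (k + 1) := abs_of_neg (by linarith)
    rw [habs, hrk, hs1]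
    nlinarith
end

section
/- Let L > 0, N ≥ 0, γ > L, Δ > 0 and set T̃ = √(2N/L). Let k₁ = ⌈T̃/Δ⌉ and k₂ = ⌈T̂/Δ⌉ where T̂ = 2√(2N/L) + R₁/(γ−L) + 3Δ(γ − L/2)/(γ−L). Suppose a sequence (V_k) of nonnegative reals satisfies V_{k₁} ≤ R₁ + k₁Δ(γ+L) and, for every k with k₁ < k ≤ k₂ such that V_k > 2√(2NL) + LΔ/2, the decrease V_k ≤ V_{k−1} − Δ(γ−L) holds. Then V_{k₂} ≤ 2√(2NL) + LΔ/2. -/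
/-!
Suppose `V k₂` lies above the band `B = 2√(2NL) + LΔ/2`. Since every descent step lowers `V`
by `Δ(γ - L) > 0`, walking backwards from `k₂` keeps `V` above `B` all the way down to `k₁`, so
`V k₂ + (k₂ - k₁) Δ (γ - L) ≤ V k₁ ≤ R₁ + k₁ Δ (γ + L)`.  With `k₁ Δ < T̃ + Δ`, `T̂ ≤ k₂ Δ` and
`√(2NL) = L T̃` this forces `Δ (γ - L) < 0`.
-/

open Real

theorem add_mul_sub_le_of_descent {V : ℕ → ℝ} {B d : ℝ} (hd : 0 ≤ d) {m n : ℕ} (hmn : m ≤ n)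
    (hdesc : ∀ k, m < k → k ≤ n → B < V k → V k ≤ V (k - 1) - d) (hB : B < V n) :
    V n + ((n : ℝ) - m) * d ≤ V m := by
  induction n, hmn using Nat.le_induction with
  | base => simp
  | succ n hmn ih =>
    have hstep := hdesc (n + 1) (by omega) le_rfl hB
    rw [Nat.add_sub_cancel] at hstep
    have hprev := ih (fun k hmk hkn => hdesc k hmk (by omega)) (by linarith)
    push_cast
    linarith

theorem Nat.ceil_div_mul_lt_add {a Δ : ℝ} (ha : 0 ≤ a) (hΔ : 0 < Δ) :
    (⌈a / Δ⌉₊ : ℝ) * Δ < a + Δ := by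
  have h := Nat.ceil_lt_add_one (div_nonneg ha hΔ.le)
  calc (⌈a / Δ⌉₊ : ℝ) * Δ < (a / Δ + 1) * Δ := mul_lt_mul_of_pos_right h hΔ
    _ = a + Δ := by field_simp

theorem Nat.le_ceil_div_mul (a : ℝ) {Δ : ℝ} (hΔ : 0 < Δ) : a ≤ (⌈a / Δ⌉₊ : ℝ) * Δ :=
  (div_le_iff₀ hΔ).mp (Nat.le_ceil _)

theorem Real.sqrt_mul_eq_mul_sqrt_div (x : ℝ) {L : ℝ} (hL : 0 < L) :
    √(x * L) = L * √(x / L) := by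
  rw [show x * L = L ^ 2 * (x / L) by field_simp, Real.sqrt_mul (sq_nonneg L),
    Real.sqrt_sq hL.le]

theorem discrete_convergence_time_general
    (L N γ Δ R₁ : ℝ) (hL : 0 < L) (hγ : L < γ) (hΔ : 0 < Δ)
    (hR₁ : 0 ≤ R₁)
    (V : ℕ → ℝ)
    (k₁ k₂ : ℕ)
    (hk₁ : k₁ = ⌈Real.sqrt (2 * N / L) / Δ⌉₊)
    (hk₂ : k₂ = ⌈(2 * Real.sqrt (2 * N / L) + R₁ / (γ - L)
        + 3 * Δ * (γ - L / 2) / (γ - L)) / Δ⌉₊)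
    (hV1 : V k₁ ≤ R₁ + k₁ * Δ * (γ + L))
    (hdec : ∀ k, k₁ < k → k ≤ k₂ →
      2 * Real.sqrt (2 * N * L) + L * Δ / 2 < V k →
      V k ≤ V (k - 1) - Δ * (γ - L)) :
    V k₂ ≤ 2 * Real.sqrt (2 * N * L) + L * Δ / 2 := by
  by_contra! habove
  rw [Real.sqrt_mul_eq_mul_sqrt_div _ hL] at habove hdec
  set T := √(2 * N / L)
  set T' := 2 * T + R₁ / (γ - L) + 3 * Δ * (γ - L / 2) / (γ - L)
  have hγL : 0 < γ - L := sub_pos.mpr hγ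
  have hT : 0 ≤ T := Real.sqrt_nonneg _
  have hTT' : T ≤ T' := by
    have : 0 ≤ 3 * Δ * (γ - L / 2) / (γ - L) :=
      div_nonneg (mul_nonneg (by positivity) (by linarith)) hγL.le
    have : 0 ≤ R₁ / (γ - L) := div_nonneg hR₁ hγL.le
    linarith
  have hk₁₂ : k₁ ≤ k₂ := hk₁ ▸ hk₂ ▸ Nat.ceil_le_ceil (div_le_div_of_nonneg_right hTT' hΔ.le)
  have hdescent := add_mul_sub_le_of_descent (mul_nonneg hΔ.le hγL.le) hk₁₂ hdec habove
  have hk₁Δ : (k₁ : ℝ) * Δ < T + Δ := hk₁ ▸ Nat.ceil_div_mul_lt_add hT hΔ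
  have hk₂Δ : T' * (γ - L) ≤ k₂ * Δ * (γ - L) :=
    mul_le_mul_of_nonneg_right (hk₂ ▸ Nat.le_ceil_div_mul T' hΔ) hγL.le
  have hT' : T' * (γ - L) = 2 * T * (γ - L) + R₁ + 3 * Δ * (γ - L / 2) := by
    simp only [T']; field_simp
  linarith [mul_lt_mul_of_pos_left hk₁Δ (hL.trans hγ), mul_pos hΔ hγL]

/-- Discrete backward-integration argument in the proof of Theorem 2 (case `k₀ = 0`):
a nonnegative sequence `V` bounded at `k₁ = ⌈T̃/Δ⌉` and decreasing by `Δ(γ−L)` at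
every step where it exceeds the accuracy band satisfies
`V_{k₂} ≤ 2√(2NL) + LΔ/2` with `k₂ = ⌈T̂/Δ⌉`. -/
theorem discrete_convergence_time
    (L N γ Δ R₁ : ℝ) (hL : 0 < L) (hN : 0 ≤ N) (hγ : L < γ) (hΔ : 0 < Δ)
    (hR₁ : 0 ≤ R₁)
    (V : ℕ → ℝ) (hVnn : ∀ k, 0 ≤ V k)
    (k₁ k₂ : ℕ)
    (hk₁ : k₁ = ⌈Real.sqrt (2 * N / L) / Δ⌉₊)
    (hk₂ : k₂ = ⌈(2 * Real.sqrt (2 * N / L) + R₁ / (γ - L)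
        + 3 * Δ * (γ - L / 2) / (γ - L)) / Δ⌉₊)
    (hV1 : V k₁ ≤ R₁ + k₁ * Δ * (γ + L))
    (hdec : ∀ k, k₁ < k → k ≤ k₂ →
      2 * Real.sqrt (2 * N * L) + L * Δ / 2 < V k →
      V k ≤ V (k - 1) - Δ * (γ - L)) :
    V k₂ ≤ 2 * Real.sqrt (2 * N * L) + L * Δ / 2 :=
  discrete_convergence_time_general L N γ Δ R₁ hL hγ hΔ hR₁ V k₁ k₂ hk₁ hk₂ hV1 hdec
end

section
/- Let L > 0, N ≥ 0, Δ > 0, and let f have L-Lipschitz derivative with samples u_k = f(kΔ) + η_k, |η_k| ≤ N. Suppose that for some k ≥ 1 and some estimate β ∈ ℝ the inequality |u_0 − u_k + β·kΔ| ≤ L k²Δ²/2 holds. Then |β − f'(kΔ)| ≤ L·kΔ + 2N/(kΔ). -/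
open Set

/-- Fencing `t ↦ f t - f a - f' b * (t - a)` by `t ↦ L * ((b - a) ^ 2 - (b - t) ^ 2) / 2`, whose
derivative `L * (b - t)` dominates `|f' t - f' b|`. -/
theorem abs_sub_sub_deriv_mul_le_of_abs_deriv_sub_le {f f' : ℝ → ℝ} {a b L : ℝ} (hab : a ≤ b)
    (hf : ∀ x ∈ Icc a b, HasDerivAt f (f' x) x)
    (hf' : ∀ x ∈ Icc a b, |f' x - f' b| ≤ L * (b - x)) :
    |f b - f a - f' b * (b - a)| ≤ L * (b - a) ^ 2 / 2 := by
  have hg (x : ℝ) (hx : x ∈ Icc a b) :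
      HasDerivAt (fun t ↦ f t - f a - f' b * (t - a)) (f' x - f' b) x := by
    have := ((hf x hx).sub_const (f a)).sub (((hasDerivAt_id' x).sub_const a).const_mul (f' b))
    rwa [mul_one] at this
  have hB (x : ℝ) :
      HasDerivAt (fun t ↦ L * ((b - a) ^ 2 - (b - t) ^ 2) / 2) (L * (b - x)) x := by
    have := ((((hasDerivAt_id' x).const_sub b).pow 2).const_sub ((b - a) ^ 2)).const_mul L
    exact (this.div_const 2).congr_deriv (by push_cast; ring)
  have key := image_norm_le_of_norm_deriv_right_le_deriv_boundary
    (fun x hx ↦ (hg x hx).continuousAt.continuousWithinAt)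
    (fun x hx ↦ (hg x (Ico_subset_Icc_self hx)).hasDerivWithinAt) (by simp) hB
    (fun x hx ↦ hf' x (Ico_subset_Icc_self hx)) (right_mem_Icc.2 hab)
  simpa using key

theorem sample_based_transient_accuracy_general
    (L N Δ : ℝ) (hΔ : 0 < Δ)
    (f f' : ℝ → ℝ)
    (hdiff : ∀ x, 0 ≤ x → HasDerivAt f (f' x) x)
    (hlip : ∀ a b, 0 ≤ a → 0 ≤ b → |f' a - f' b| ≤ L * |a - b|)
    (η : ℕ → ℝ) (hη : ∀ j, |η j| ≤ N)
    (k : ℕ) (hk : 1 ≤ k) (β : ℝ)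
    (hβ : |(f 0 + η 0) - (f ((k : ℝ) * Δ) + η k) + β * ((k : ℝ) * Δ)|
      ≤ L * (k : ℝ) ^ 2 * Δ ^ 2 / 2) :
    |β - f' ((k : ℝ) * Δ)| ≤ L * ((k : ℝ) * Δ) + 2 * N / ((k : ℝ) * Δ) := by
  set T : ℝ := (k : ℝ) * Δ
  have hT : 0 < T := mul_pos (by exact_mod_cast hk) hΔ
  have htaylor : |f T - f 0 - f' T * (T - 0)| ≤ L * (T - 0) ^ 2 / 2 :=
    abs_sub_sub_deriv_mul_le_of_abs_deriv_sub_le hT.le (fun x hx ↦ hdiff x hx.1) fun x hx ↦ by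
      rw [← abs_of_nonneg (sub_nonneg.2 hx.2), abs_sub_comm T]
      exact hlip x T hx.1 hT.le
  have hβT : |(f 0 + η 0) - (f T + η k) + β * T| ≤ L * T ^ 2 / 2 := by
    convert hβ using 1; ring
  -- `(β - f' T) * T` is the sum of the two bracketed quantities up to the noise `η k - η 0`.
  have hscaled : |(β - f' T) * T| ≤ L * T ^ 2 + 2 * N := by
    rw [sub_zero] at htaylor
    have hη0 := abs_le.1 (hη 0)
    have hηk := abs_le.1 (hη k)
    rw [abs_le] at htaylor hβT ⊢
    constructor <;> linarith [htaylor.1, htaylor.2, hβT.1, hβT.2]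
  rw [abs_mul, abs_of_pos hT] at hscaled
  calc |β - f' T| ≤ (L * T ^ 2 + 2 * N) / T := (le_div_iff₀ hT).2 hscaled
    _ = L * T + 2 * N / T := by field_simp

/-- Concluding step of the transient accuracy proof (Lemma 2): from
`|u_0 − u_k + β·kΔ| ≤ L k²Δ²/2` with noisy samples `u_j = f(jΔ) + η_j`, `|η_j| ≤ N`,
one obtains `|β − f'(kΔ)| ≤ L·kΔ + 2N/(kΔ)`. -/
theorem sample_based_transient_accuracy
    (L N Δ : ℝ) (hL : 0 < L) (hN : 0 ≤ N) (hΔ : 0 < Δ)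
    (f f' : ℝ → ℝ)
    (hdiff : ∀ x, 0 ≤ x → HasDerivAt f (f' x) x)
    (hlip : ∀ a b, 0 ≤ a → 0 ≤ b → |f' a - f' b| ≤ L * |a - b|)
    (η : ℕ → ℝ) (hη : ∀ j, |η j| ≤ N)
    (k : ℕ) (hk : 1 ≤ k) (β : ℝ)
    (hβ : |(f 0 + η 0) - (f ((k : ℝ) * Δ) + η k) + β * ((k : ℝ) * Δ)|
      ≤ L * (k : ℝ) ^ 2 * Δ ^ 2 / 2) :
    |β - f' ((k : ℝ) * Δ)| ≤ L * ((k : ℝ) * Δ) + 2 * N / ((k : ℝ) * Δ) :=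
  sample_based_transient_accuracy_general L N Δ hΔ f f' hdiff hlip η hη k hk β hβ
end
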